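/- arXiv:1905.07294 — 4 statements merged into one kernel-verified Lean document; each statement's English description precedes it below -/
import Mathlib

section
/- For every û₀ ∈ X = L²(ℝ^d; ℂ), the restriction operator R satisfies the Parseval-type identity ‖R û₀‖_{X_S} = (2π)^{-(d-1)/2} ‖û₀‖_{X}. -/
/-
For `ξ > 0` one has `|R û₀ (ξ, q)|² = (2π)^{-(d-1)} ξ^{d-1} |û₀ (ξ q)|²`, and `R û₀` vanishes for
`ξ ≤ 0`. So `‖R û₀‖²` is `(2π)^{-(d-1)}` times `∫_{ξ>0} ∫_{S^{d-1}} ξ^{d-1} |û₀ (ξ q)|² dσ dξ`,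
which is `‖û₀‖²` by polar coordinates: under `x ↦ (x / ‖x‖, ‖x‖)` Lebesgue measure on `ℝ^d \ {0}`
becomes `σ ⊗ r^{d-1} dr` (`measurePreserving_homeomorphUnitSphereProd`). Lower integrals
transport along measurable embeddings and against finite densities without any measurability
of the integrand, so the polar formula holds for every `[0, ∞]`-valued function.
-/

open MeasureTheory Real Filter Metric
open scoped RealInnerProductSpace Topology ENNReal

noncomputable section

/-- The restriction operator `R`: `(R û₀)(ξ,q) = (|ξ|/(2πi))^{(d-1)/2} 1_{ξ>0} û₀(|ξ|q)`. -/
def restrictionOp (d : ℕ) (u0 : EuclideanSpace ℝ (Fin d) → ℂ)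
    (ξ : ℝ) (q : EuclideanSpace ℝ (Fin d)) : ℂ :=
  (((|ξ| : ℝ) : ℂ) / (2 * (π : ℂ) * Complex.I)) ^ (((d : ℂ) - 1) / 2) *
    Set.indicator (Set.Ioi (0 : ℝ)) (fun _ => (1 : ℂ)) ξ * u0 (|ξ| • q)

open Set
open scoped NNReal

namespace MeasureTheory

instance : SigmaFinite (volume.comap (Subtype.val : Ioi (0 : ℝ) → ℝ)) := by
  simpa [Measure.volumeIoiPow] using (inferInstance : SigmaFinite (Measure.volumeIoiPow 0))

theorem lintegral_prod_volumeIoiPow {α : Type*} [MeasurableSpace α] (ν : Measure α) [SFinite ν]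
    (n : ℕ) (g : α × ℝ → ℝ≥0∞) :
    ∫⁻ z, g (z.1, z.2) ∂(ν.prod (Measure.volumeIoiPow n))
      = ∫⁻ z, (Ioi 0).indicator (fun r ↦ ENNReal.ofReal (r ^ n)) z.2 * g z ∂(ν.prod volume) := by
  have hdensity : Measurable fun r : Ioi (0 : ℝ) ↦ ENNReal.ofReal (r.1 ^ n) := by fun_prop
  have hemb : MeasurableEmbedding (Prod.map id Subtype.val : α × Ioi (0 : ℝ) → α × ℝ) :=
    MeasurableEmbedding.id.prodMap (.subtype_coe measurableSet_Ioi)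
  have hindicator : ∀ z : α × ℝ, (Ioi 0).indicator (fun r ↦ ENNReal.ofReal (r ^ n)) z.2 * g z
      = (univ ×ˢ Ioi 0).indicator (fun z ↦ ENNReal.ofReal (z.2 ^ n) * g z) z := by
    intro z
    by_cases hz : z.2 ∈ Ioi 0 <;> simp [hz]
  rw [lintegral_congr hindicator, lintegral_indicator (MeasurableSet.univ.prod measurableSet_Ioi),
    Measure.volumeIoiPow, prod_withDensity_right hdensity,
    lintegral_withDensity_eq_lintegral_mul_non_measurable _ (by fun_prop)
      (.of_forall fun _ ↦ ENNReal.ofReal_lt_top),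
    ← Measure.prod_restrict, Measure.restrict_univ, ← map_comap_subtype_coe measurableSet_Ioi,
    ← Measure.map_id (μ := ν), Measure.map_prod_map _ _ measurable_id measurable_subtype_coe,
    hemb.lintegral_map]
  simp [Prod.map]

section Polar

variable {E : Type*} [NormedAddCommGroup E] [NormedSpace ℝ E] [Nontrivial E]
  [FiniteDimensional ℝ E] [MeasurableSpace E] [BorelSpace E] (μ : Measure E) [μ.IsAddHaarMeasure]

theorem lintegral_comp_smul_toSphere_prod_volumeIoiPow (f : E → ℝ≥0∞) :
    ∫⁻ z, f (z.2.1 • z.1.1) ∂(μ.toSphere.prod (Measure.volumeIoiPow (Module.finrank ℝ E - 1)))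
      = ∫⁻ x, f x ∂μ := by
  have hpolar : ∀ x : ({0}ᶜ : Set E),
      f ((homeomorphUnitSphereProd E x).2.1 • (homeomorphUnitSphereProd E x).1.1) = f x := by
    intro x
    simp [smul_inv_smul₀ (norm_ne_zero_iff.2 x.2)]
  rw [← (μ.measurePreserving_homeomorphUnitSphereProd).lintegral_comp_emb
      (Homeomorph.measurableEmbedding _), lintegral_congr hpolar,
    lintegral_subtype_comap (measurableSet_singleton 0).compl, restrict_compl_singleton]

theorem lintegral_eq_lintegral_prod_toSphere (f : E → ℝ≥0∞) :
    ∫⁻ x, f x ∂μ = ∫⁻ p : ℝ × sphere (0 : E) 1,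
      (Ioi 0).indicator (fun r ↦ ENNReal.ofReal (r ^ (Module.finrank ℝ E - 1))) p.1 *
        f (p.1 • p.2) ∂(volume.prod μ.toSphere) := by
  rw [← lintegral_comp_smul_toSphere_prod_volumeIoiPow μ]
  exact (lintegral_prod_volumeIoiPow _ _ fun z : sphere (0 : E) 1 × ℝ ↦ f (z.2 • z.1.1)).trans
    (lintegral_prod_swap _).symm

end Polar

theorem eLpNorm_eq_mul_of_lintegral_rpow_enorm {α β ε ε' : Type*}
    [MeasurableSpace α] [MeasurableSpace β] [ENorm ε] [ENorm ε'] {μ : Measure α}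
    {ν : Measure β} {f : α → ε} {g : β → ε'} {p : ℝ≥0} (hp : p ≠ 0) {c : ℝ≥0∞}
    (h : ∫⁻ a, ‖f a‖ₑ ^ (p : ℝ) ∂μ = c ^ (p : ℝ) * ∫⁻ b, ‖g b‖ₑ ^ (p : ℝ) ∂ν) :
    eLpNorm f p μ = c * eLpNorm g p ν := by
  apply ENNReal.rpow_left_injective (NNReal.coe_ne_zero.2 hp)
  dsimp only
  rw [eLpNorm_nnreal_pow_eq_lintegral hp, h, ENNReal.mul_rpow_of_nonneg _ _ p.coe_nonneg,
    eLpNorm_nnreal_pow_eq_lintegral hp]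

end MeasureTheory

section RestrictionOp

variable {d : ℕ} (u0 : EuclideanSpace ℝ (Fin d) → ℂ)

theorem restrictionOp_of_nonpos {ξ : ℝ} (hξ : ξ ≤ 0) (q : EuclideanSpace ℝ (Fin d)) :
    restrictionOp d u0 ξ q = 0 := by
  rw [restrictionOp, indicator_of_notMem (notMem_Ioi.2 hξ), mul_zero, zero_mul]

theorem norm_restrictionOp_of_pos {ξ : ℝ} (hξ : 0 < ξ) (q : EuclideanSpace ℝ (Fin d)) :
    ‖restrictionOp d u0 ξ q‖ = (ξ / (2 * π)) ^ (((d : ℝ) - 1) / 2) * ‖u0 (ξ • q)‖ := by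
  have hexponent : ((d : ℂ) - 1) / 2 = (((d : ℝ) - 1) / 2 : ℝ) := by push_cast; ring
  rw [restrictionOp, indicator_of_mem (mem_Ioi.2 hξ), abs_of_pos hξ, mul_one, norm_mul,
    hexponent, Complex.norm_cpow_real, norm_div, Complex.norm_real, norm_mul, Complex.norm_I]
  simp [abs_of_pos hξ, abs_of_pos pi_pos]

theorem enorm_restrictionOp_rpow_two (hd : 1 ≤ d) (ξ : ℝ) (q : EuclideanSpace ℝ (Fin d)) :
    ‖restrictionOp d u0 ξ q‖ₑ ^ (2 : ℝ) =
      ENNReal.ofReal ((2 * π) ^ (-(((d : ℝ) - 1) / 2))) ^ (2 : ℝ) *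
        ((Ioi 0).indicator (fun r ↦ ENNReal.ofReal (r ^ (d - 1))) ξ * ‖u0 (ξ • q)‖ₑ ^ (2 : ℝ)) := by
  rcases le_or_gt ξ 0 with hξ | hξ
  · rw [restrictionOp_of_nonpos u0 hξ, indicator_of_notMem (notMem_Ioi.2 hξ)]
    simp
  have h2π : 0 < 2 * π := by positivity
  have hd' : ((d - 1 : ℕ) : ℝ) = (d : ℝ) - 1 := by rw [Nat.cast_sub hd, Nat.cast_one]
  rw [indicator_of_mem (mem_Ioi.2 hξ), ← ofReal_norm, ← ofReal_norm,
    norm_restrictionOp_of_pos u0 hξ, ENNReal.ofReal_rpow_of_nonneg (by positivity) zero_le_two,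
    ENNReal.ofReal_rpow_of_nonneg (by positivity) zero_le_two,
    ENNReal.ofReal_rpow_of_nonneg (norm_nonneg _) zero_le_two,
    ← ENNReal.ofReal_mul (by positivity), ← ENNReal.ofReal_mul (by positivity)]
  congr 1
  rw [Real.mul_rpow (by positivity) (norm_nonneg _), ← Real.rpow_mul (by positivity),
    ← Real.rpow_mul h2π.le, Real.div_rpow hξ.le h2π.le, ← Real.rpow_natCast, hd',
    show ((d : ℝ) - 1) / 2 * 2 = (d : ℝ) - 1 by ring,
    show -(((d : ℝ) - 1) / 2) * 2 = -((d : ℝ) - 1) by ring, Real.rpow_neg h2π.le]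
  ring

end RestrictionOp

theorem restriction_parseval_general (d : ℕ) (hd : 1 ≤ d)
    (u0 : EuclideanSpace ℝ (Fin d) → ℂ) :
    eLpNorm (fun p : ℝ × sphere (0 : EuclideanSpace ℝ (Fin d)) 1 =>
        restrictionOp d u0 p.1 (p.2 : EuclideanSpace ℝ (Fin d))) 2
      ((volume : Measure ℝ).prod
        (Measure.toSphere (volume : Measure (EuclideanSpace ℝ (Fin d)))))
    = ENNReal.ofReal ((2 * π) ^ (-(((d : ℝ) - 1) / 2))) *
      eLpNorm u0 2 (volume : Measure (EuclideanSpace ℝ (Fin d))) := by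
  have : Nontrivial (EuclideanSpace ℝ (Fin d)) :=
    Module.nontrivial_of_finrank_pos (R := ℝ) (by rw [finrank_euclideanSpace_fin]; omega)
  refine eLpNorm_eq_mul_of_lintegral_rpow_enorm (p := 2) two_ne_zero ?_
  rw [NNReal.coe_ofNat, lintegral_eq_lintegral_prod_toSphere volume, finrank_euclideanSpace_fin,
    ← lintegral_const_mul' _ _ (ENNReal.rpow_ne_top_of_nonneg zero_le_two ENNReal.ofReal_ne_top)]
  exact lintegral_congr fun p ↦ enorm_restrictionOp_rpow_two u0 hd p.1 p.2

/-- Parseval-type identity for the restriction operator: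
`‖R û₀‖_{X_S} = (2π)^{-(d-1)/2} ‖û₀‖_X`. -/
theorem restriction_parseval (d : ℕ) (hd : 1 ≤ d)
    (u0 : EuclideanSpace ℝ (Fin d) → ℂ)
    (hu0 : MemLp u0 2 (volume : Measure (EuclideanSpace ℝ (Fin d)))) :
    eLpNorm (fun p : ℝ × sphere (0 : EuclideanSpace ℝ (Fin d)) 1 =>
        restrictionOp d u0 p.1 (p.2 : EuclideanSpace ℝ (Fin d))) 2
      ((volume : Measure ℝ).prod
        (Measure.toSphere (volume : Measure (EuclideanSpace ℝ (Fin d)))))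
    = ENNReal.ofReal ((2 * π) ^ (-(((d : ℝ) - 1) / 2))) *
      eLpNorm u0 2 (volume : Measure (EuclideanSpace ℝ (Fin d))) :=
  restriction_parseval_general d hd u0

end
end

section
/- Let β ∈ (1/6, 1/2). Then the oscillatory integrals I_N := ∫₀^{N^{-β}} N^{1/2} e^{i(1 − cos θ)N} dθ converge to (1/2)√π (1 + i) = (1/2)(2πi)^{1/2} as N → ∞. -/
open MeasureTheory Real Filter
open scoped Topology

set_option maxHeartbeats 1000000

private lemma sqrt_two_pi_I :
    (2 * (π : ℂ) * Complex.I) ^ ((1 : ℂ)/2) = ((Real.sqrt π : ℝ) : ℂ) * (1 + Complex.I) := by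
  have h2π : (0:ℝ) < 2 * π := by positivity
  have hz : (2 * (π : ℂ) * Complex.I) = ((2 * π : ℝ) : ℂ) * Complex.I := by push_cast; ring
  have hlog : Complex.log (2 * (π : ℂ) * Complex.I) = (Real.log (2*π) : ℂ) + (π/2 : ℝ) * Complex.I := by
    rw [hz, Complex.log_ofReal_mul h2π Complex.I_ne_zero, Complex.log_I]
    push_cast; ring
  have hne : (2 * (π : ℂ) * Complex.I) ≠ 0 := by
    simp [Complex.ext_iff, Real.pi_ne_zero]
  rw [Complex.cpow_def_of_ne_zero hne, hlog]
  have : ((Real.log (2*π) : ℂ) + (π/2 : ℝ) * Complex.I) * ((1:ℂ)/2)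
      = ((Real.log (2*π)/2 : ℝ) : ℂ) + ((π/4 : ℝ) : ℂ) * Complex.I := by push_cast; ring
  rw [this, Complex.exp_add, Complex.exp_mul_I, ← Complex.ofReal_exp,
    ← Complex.ofReal_cos, ← Complex.ofReal_sin, Real.cos_pi_div_four, Real.sin_pi_div_four]
  have hexp : Real.exp (Real.log (2*π)/2) = Real.sqrt (2*π) := by
    rw [Real.sqrt_eq_rpow, Real.rpow_def_of_pos h2π]; ring_nf
  rw [hexp]
  have : Real.sqrt (2*π) * (Real.sqrt 2 / 2) = Real.sqrt π := by
    rw [show (2:ℝ)*π = π*2 by ring, Real.sqrt_mul Real.pi_pos.le]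
    rw [show √π * √2 * (√2/2) = √π * (√2*√2) / 2 by ring, Real.mul_self_sqrt (by norm_num : (0:ℝ) ≤ 2)]
    ring
  have goal : (Real.sqrt (2*π) : ℂ) * ((Real.sqrt 2/2 : ℝ) + (Real.sqrt 2/2 : ℝ) * Complex.I)
      = ((Real.sqrt π : ℝ) : ℂ) * (1 + Complex.I) := by
    rw [mul_add, ← mul_assoc, ← Complex.ofReal_mul, this]
    push_cast [← Complex.ofReal_mul, this]
    ring
  rw [← goal]


private lemma tail_bound (ε U : ℝ) (hε : 0 < ε) (hU : 0 < U) :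
    ‖∫ t in Set.Ioi U, Complex.exp ((Complex.I/2 - (ε:ℂ)) * (t:ℂ)^2)‖ ≤ 2/U := by
  set c : ℂ := Complex.I/2 - (ε:ℂ) with hc
  have hcre : c.re = -ε := by simp [hc]
  have hcim : c.im = 1/2 := by simp [hc]
  have hcne : c ≠ 0 := by
    intro h; rw [h] at hcim; simp at hcim
  have habs : 1/2 ≤ ‖c‖ := by
    calc (1/2 : ℝ) = |c.im| := by rw [hcim, abs_of_pos]; norm_num
    _ ≤ ‖c‖ := Complex.abs_im_le_norm c
  have hnorm : ∀ t : ℝ, ‖Complex.exp (c * (t:ℂ)^2)‖ = Real.exp (-ε * t^2) := by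
    intro t
    rw [Complex.norm_exp]
    congr 1
    simp [Complex.mul_re, hcre, hcim, ← Complex.ofReal_pow]
  have hnorm1 : ∀ t : ℝ, ‖Complex.exp (c * (t:ℂ)^2)‖ ≤ 1 := by
    intro t; rw [hnorm t]
    exact Real.exp_le_one_iff.mpr (by nlinarith [sq_nonneg t])
  -- integrability of the main gaussian
  have hb : (0:ℝ) < ((ε:ℂ) - Complex.I/2).re := by simp [hε]
  have hint1 : Integrable (fun t : ℝ => Complex.exp (c * (t:ℂ)^2)) := by
    have := integrable_cexp_neg_mul_sq hb
    simpa [hc, neg_sub] using this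
  -- the auxiliary function
  set g : ℝ → ℂ := fun t => Complex.exp (c * (t:ℂ)^2) / (2 * c * t) with hg
  have hderiv : ∀ t : ℝ, t ≠ 0 → HasDerivAt g
      (Complex.exp (c * (t:ℂ)^2) - Complex.exp (c * (t:ℂ)^2) / (2 * c * (t:ℂ)^2)) t := by
    intro t ht
    have htC : (t:ℂ) ≠ 0 := Complex.ofReal_ne_zero.mpr ht
    have h1 : HasDerivAt (fun z : ℂ => Complex.exp (c * z^2))
        (Complex.exp (c * (t:ℂ)^2) * (c * (2*t))) (t:ℂ) := by
      have hs : HasDerivAt (fun z : ℂ => c * z^2) (c * (2*t)) (t:ℂ) := by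
        simpa [mul_comm, mul_assoc] using (hasDerivAt_pow 2 (t:ℂ)).const_mul c
      exact hs.cexp
    have h2 : HasDerivAt (fun z : ℂ => (2 * c * z)⁻¹)
        (-(2*c) / (2 * c * (t:ℂ))^2) (t:ℂ) := by
      have hs : HasDerivAt (fun z : ℂ => 2 * c * z) (2*c) (t:ℂ) := by
        simpa using (hasDerivAt_id (t:ℂ)).const_mul (2*c)
      have hne : 2 * c * (t:ℂ) ≠ 0 := by
        exact mul_ne_zero (mul_ne_zero two_ne_zero hcne) htC
      exact hs.inv hne
    have h3 := (h1.mul h2).comp_ofReal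
    have heq : Complex.exp (c * (t:ℂ)^2) * (c * (2*t)) * (2 * c * (t:ℂ))⁻¹
        + Complex.exp (c * (t:ℂ)^2) * (-(2*c) / (2 * c * (t:ℂ))^2)
        = Complex.exp (c * (t:ℂ)^2) - Complex.exp (c * (t:ℂ)^2) / (2 * c * (t:ℂ)^2) := by
      field_simp
      ring
    rw [heq] at h3
    simpa [hg, div_eq_mul_inv] using h3
  -- integrability of the correction term on Ioi U
  have hrpow : IntegrableOn (fun t : ℝ => t ^ (-2 : ℝ)) (Set.Ioi U) := by
    rw [integrableOn_Ioi_rpow_iff hU]; norm_num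
  have hbound2 : ∀ t : ℝ, U < t →
      ‖Complex.exp (c * (t:ℂ)^2) / (2 * c * (t:ℂ)^2)‖ ≤ t ^ (-2 : ℝ) := by
    intro t ht
    have ht0 : 0 < t := hU.trans ht
    rw [norm_div]
    have hden : ‖2 * c * (t:ℂ)^2‖ = 2 * ‖c‖ * t^2 := by
      rw [norm_mul, norm_mul, norm_pow]
      simp [abs_of_pos ht0]
    rw [hden]
    have h1 : t^2 ≤ 2 * ‖c‖ * t^2 := by nlinarith [sq_nonneg t]
    have h2 : (0:ℝ) < t^2 := by positivity
    calc ‖Complex.exp (c * (t:ℂ)^2)‖ / (2 * ‖c‖ * t^2)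
        ≤ 1 / t^2 := by
          apply div_le_div₀ (by norm_num) (hnorm1 t) h2 h1
      _ = t ^ (-2:ℝ) := by
          rw [Real.rpow_neg ht0.le, one_div]
          norm_num [Real.rpow_natCast]
  have hint2 : IntegrableOn (fun t : ℝ => Complex.exp (c * (t:ℂ)^2) / (2 * c * (t:ℂ)^2))
      (Set.Ioi U) := by
    apply Integrable.mono' hrpow
    · apply ContinuousOn.aestronglyMeasurable _ measurableSet_Ioi
      apply ContinuousOn.div
      · exact (Continuous.continuousOn (by continuity))
      · exact (Continuous.continuousOn (by continuity))
      · intro t ht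
        have ht0 : (0:ℝ) < t := hU.trans ht
        exact mul_ne_zero (mul_ne_zero two_ne_zero hcne)
          (pow_ne_zero _ (Complex.ofReal_ne_zero.mpr ht0.ne'))
    · filter_upwards [ae_restrict_mem measurableSet_Ioi] with t ht
      exact hbound2 t ht
  have hint2' : IntegrableOn
      (fun t : ℝ => Complex.exp (c * (t:ℂ)^2) - Complex.exp (c * (t:ℂ)^2) / (2 * c * (t:ℂ)^2))
      (Set.Ioi U) := (hint1.integrableOn).sub hint2
  -- g tends to 0
  have hgtend : Tendsto g atTop (𝓝 0) := by
    apply squeeze_zero_norm' (a := fun t : ℝ => 1/t) ?_ ?_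
    · filter_upwards [eventually_gt_atTop (0:ℝ)] with t ht
      rw [hg]
      simp only [norm_div]
      have hden : ‖2 * c * (t:ℂ)‖ = 2 * ‖c‖ * t := by
        rw [norm_mul, norm_mul]
        simp [abs_of_pos ht]
      rw [hden]
      apply div_le_div₀ (by positivity) (hnorm1 t) (by positivity)
      nlinarith
    · simpa [one_div] using (tendsto_inv_atTop_zero : Tendsto (fun x:ℝ => x⁻¹) atTop (𝓝 0))
  -- integration by parts identity
  have hcont : ContinuousWithinAt g (Set.Ici U) U :=
    (hderiv U hU.ne').continuousAt.continuousWithinAt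
  have hder : ∀ x ∈ Set.Ioi U, HasDerivAt g
      (Complex.exp (c * (x:ℂ)^2) - Complex.exp (c * (x:ℂ)^2) / (2 * c * (x:ℂ)^2)) x :=
    fun x hx => hderiv x (hU.trans hx).ne'
  have key := integral_Ioi_of_hasDerivAt_of_tendsto hcont hder hint2' hgtend
  rw [integral_sub hint1.integrableOn hint2] at key
  have hmain : ∫ t in Set.Ioi U, Complex.exp (c * (t:ℂ)^2)
      = (∫ t in Set.Ioi U, Complex.exp (c * (t:ℂ)^2) / (2 * c * (t:ℂ)^2)) - g U := by
    rw [zero_sub] at key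
    linear_combination key
  rw [hmain]
  have h5 : ‖∫ t in Set.Ioi U, Complex.exp (c * (t:ℂ)^2) / (2 * c * (t:ℂ)^2)‖ ≤ 1/U := by
    have hle := norm_integral_le_of_norm_le hrpow
      (by filter_upwards [ae_restrict_mem measurableSet_Ioi] with t ht
          exact hbound2 t ht)
    have hval : ∫ t in Set.Ioi U, t ^ (-2:ℝ) = 1/U := by
      rw [integral_Ioi_rpow_of_lt (by norm_num) hU]
      norm_num [Real.rpow_neg_one]
    rw [hval] at hle
    exact hle
  have h6 : ‖g U‖ ≤ 1/U := by
    rw [hg]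
    simp only [norm_div]
    have hden : ‖2 * c * (U:ℂ)‖ = 2 * ‖c‖ * U := by
      rw [norm_mul, norm_mul]
      simp [abs_of_pos hU]
    rw [hden]
    apply div_le_div₀ (by positivity) (hnorm1 U) (by positivity)
    nlinarith
  calc ‖(∫ t in Set.Ioi U, Complex.exp (c * (t:ℂ)^2) / (2 * c * (t:ℂ)^2)) - g U‖
      ≤ ‖∫ t in Set.Ioi U, Complex.exp (c * (t:ℂ)^2) / (2 * c * (t:ℂ)^2)‖ + ‖g U‖ :=
        norm_sub_le _ _
    _ ≤ 1/U + 1/U := add_le_add h5 h6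
    _ = 2/U := by ring

private lemma fresnel_tendsto :
    Tendsto (fun U : ℝ => ∫ u in (0:ℝ)..U, Complex.exp (Complex.I * (u:ℂ)^2 / 2)) atTop
      (𝓝 (((Real.sqrt π / 2 : ℝ) : ℂ) * (1 + Complex.I))) := by
  set L : ℂ := ((Real.sqrt π / 2 : ℝ) : ℂ) * (1 + Complex.I) with hL
  set F : ℝ → ℂ := fun U => ∫ u in (0:ℝ)..U, Complex.exp (Complex.I * (u:ℂ)^2 / 2) with hF
  set G : ℝ → ℂ := fun U => ((π:ℂ)/((((U^4)⁻¹ : ℝ):ℂ) - Complex.I/2))^((1:ℂ)/2)/2 with hG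
  -- G tends to L
  have hGtend : Tendsto G atTop (𝓝 L) := by
    have h1 : Tendsto (fun U : ℝ => ((U^4)⁻¹ : ℝ)) atTop (𝓝 0) :=
      tendsto_inv_atTop_zero.comp (tendsto_pow_atTop (by norm_num))
    have h2 : Tendsto (fun U : ℝ => ((((U^4)⁻¹ : ℝ):ℂ) - Complex.I/2)) atTop
        (𝓝 (0 - Complex.I/2)) := by
      exact ((Complex.continuous_ofReal.tendsto 0).comp h1).sub tendsto_const_nhds
    have hne : (0:ℂ) - Complex.I/2 ≠ 0 := by
      simp [Complex.ext_iff]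
    have h3 : Tendsto (fun U : ℝ => (π:ℂ)/((((U^4)⁻¹ : ℝ):ℂ) - Complex.I/2)) atTop
        (𝓝 ((π:ℂ)/(0 - Complex.I/2))) := tendsto_const_nhds.div h2 hne
    have hval : (π:ℂ)/(0 - Complex.I/2) = 2 * (π:ℂ) * Complex.I := by
      rw [div_eq_iff hne]
      have : Complex.I * Complex.I = -1 := Complex.I_mul_I
      linear_combination (π:ℂ) * this
    rw [hval] at h3
    have h4 : ContinuousAt (fun z : ℂ => z ^ ((1:ℂ)/2)) (2 * (π:ℂ) * Complex.I) := by
      apply continuousAt_cpow_const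
      right
      simp [Complex.mul_im, Real.pi_ne_zero]
    have h5 := (h4.tendsto.comp h3).div_const (2:ℂ)
    rw [sqrt_two_pi_I] at h5
    convert h5 using 2
    · rfl
    rw [hL]
    push_cast
    ring
  -- F - G tends to 0
  have hdiff : ∀ᶠ U in atTop, ‖F U - G U‖ ≤ 3/U := by
    filter_upwards [eventually_ge_atTop (1:ℝ)] with U hU1
    have hU : (0:ℝ) < U := lt_of_lt_of_le one_pos hU1
    set ε : ℝ := (U^4)⁻¹ with hε
    have hεpos : 0 < ε := by positivity
    set c : ℂ := Complex.I/2 - (ε:ℂ) with hc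
    set b : ℂ := (ε:ℂ) - Complex.I/2 with hb
    have hbre : (0:ℝ) < b.re := by simp [hb, hεpos]
    have hcb : ∀ t : ℝ, -b * (t:ℂ)^2 = c * (t:ℂ)^2 := by intro t; rw [hb, hc]; ring
    -- Gaussian evaluation
    have hgauss : ∫ t in Set.Ioi (0:ℝ), Complex.exp (c * (t:ℂ)^2) = G U := by
      have := integral_gaussian_complex_Ioi hbre
      simp_rw [hcb] at this
      rw [this, hG, hb]
    -- integrability
    have hint1 : Integrable (fun t : ℝ => Complex.exp (c * (t:ℂ)^2)) := by
      have := integrable_cexp_neg_mul_sq hbre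
      simpa [hcb] using this
    -- split the Gaussian integral
    have hsplit : ∫ t in Set.Ioi (0:ℝ), Complex.exp (c * (t:ℂ)^2)
        = (∫ t in Set.Ioc (0:ℝ) U, Complex.exp (c * (t:ℂ)^2))
          + ∫ t in Set.Ioi U, Complex.exp (c * (t:ℂ)^2) := by
      rw [← Set.Ioc_union_Ioi_eq_Ioi hU.le]
      exact setIntegral_union (Set.Ioc_disjoint_Ioi le_rfl) measurableSet_Ioi
        hint1.integrableOn hint1.integrableOn
    -- near-range comparison
    have hnear : ‖F U - ∫ t in Set.Ioc (0:ℝ) U, Complex.exp (c * (t:ℂ)^2)‖ ≤ 1/U := by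
      have heq : (∫ t in Set.Ioc (0:ℝ) U, Complex.exp (c * (t:ℂ)^2))
          = ∫ u in (0:ℝ)..U, Complex.exp (c * (u:ℂ)^2) :=
        (intervalIntegral.integral_of_le hU.le).symm
      rw [heq, hF]
      rw [← intervalIntegral.integral_sub]
      · have hbd : ∀ u ∈ Set.uIoc (0:ℝ) U,
            ‖Complex.exp (Complex.I * (u:ℂ)^2 / 2) - Complex.exp (c * (u:ℂ)^2)‖ ≤ ε * U^2 := by
          intro u hu
          rw [Set.uIoc_of_le hU.le] at hu
          have hu0 : 0 < u := hu.1
          have huU : u ≤ U := hu.2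
          have hsplit2 : Complex.exp (Complex.I * (u:ℂ)^2 / 2) - Complex.exp (c * (u:ℂ)^2)
              = Complex.exp (Complex.I * (u:ℂ)^2 / 2) * (1 - Complex.exp (((-(ε * u^2) : ℝ) : ℂ))) := by
            rw [mul_sub, mul_one, ← Complex.exp_add]
            congr 2
            rw [hc]; push_cast; ring
          rw [hsplit2, norm_mul]
          have h1 : ‖Complex.exp (Complex.I * (u:ℂ)^2 / 2)‖ = 1 := by
            have : Complex.I * (u:ℂ)^2 / 2 = ((u^2/2 : ℝ) : ℂ) * Complex.I := by push_cast; ring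
            rw [this, Complex.norm_exp_ofReal_mul_I]
          have h2 : ‖(1 : ℂ) - Complex.exp (((-(ε * u^2) : ℝ) : ℂ))‖ ≤ ε * u^2 := by
            rw [← Complex.ofReal_exp, ← Complex.ofReal_one, ← Complex.ofReal_sub,
              Complex.norm_real, Real.norm_eq_abs]
            have hx : (0:ℝ) ≤ ε * u^2 := by positivity
            have hle : Real.exp (-(ε * u^2)) ≤ 1 := Real.exp_le_one_iff.mpr (by linarith)
            rw [abs_of_nonneg (by linarith)]
            have := Real.add_one_le_exp (-(ε * u^2))
            linarith
          rw [h1, one_mul]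
          calc ‖(1:ℂ) - Complex.exp (((-(ε * u^2) : ℝ) : ℂ))‖ ≤ ε * u^2 := h2
            _ ≤ ε * U^2 := mul_le_mul_of_nonneg_left (by nlinarith) hεpos.le
        have := intervalIntegral.norm_integral_le_of_norm_le_const hbd
        rw [sub_zero] at this
        calc ‖∫ u in (0:ℝ)..U, (Complex.exp (Complex.I * (u:ℂ)^2 / 2) - Complex.exp (c * (u:ℂ)^2))‖
            ≤ ε * U^2 * |U| := this
          _ = (U^4)⁻¹ * U^2 * U := by rw [hε, abs_of_pos hU]
          _ = 1/U := by field_simp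
      · exact Continuous.intervalIntegrable (by continuity) _ _
      · exact hint1.intervalIntegrable
    -- tail
    have htail : ‖∫ t in Set.Ioi U, Complex.exp (c * (t:ℂ)^2)‖ ≤ 2/U := by
      have := tail_bound ε U hεpos hU
      simpa [hc] using this
    -- combine
    have : F U - G U = (F U - ∫ t in Set.Ioc (0:ℝ) U, Complex.exp (c * (t:ℂ)^2))
        - ∫ t in Set.Ioi U, Complex.exp (c * (t:ℂ)^2) := by
      rw [← hgauss, hsplit]; ring
    rw [this]
    calc ‖_ - _‖ ≤ _ + _ := norm_sub_le _ _
      _ ≤ 1/U + 2/U := add_le_add hnear htail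
      _ = 3/U := by ring
  have hdiff0 : Tendsto (fun U => F U - G U) atTop (𝓝 0) := by
    apply squeeze_zero_norm' hdiff
    have : Tendsto (fun U : ℝ => 3 * U⁻¹) atTop (𝓝 (3 * 0)) :=
      tendsto_const_nhds.mul tendsto_inv_atTop_zero
    rw [mul_zero] at this
    exact this.congr (fun U => (div_eq_mul_inv 3 U).symm)
  have h := hGtend.add hdiff0
  rw [add_zero] at h
  exact h.congr (fun U => by ring)

/-- for `β ∈ (1/6, 1/2)`, the oscillatory integrals
`I_N = ∫₀^{N^{-β}} N^{1/2} e^{i(1-cos θ)N} dθ` converge to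
`(1/2)√π(1+i) = (1/2)(2πi)^{1/2}` as `N → ∞`. -/
theorem oscillatory_integral_limit (β : ℝ) (hβ₁ : 1 / 6 < β) (hβ₂ : β < 1 / 2) :
    Filter.Tendsto (fun N : ℝ =>
        ∫ θ in Set.Ioo (0 : ℝ) (N ^ (-β)),
          ((N ^ ((1 : ℝ) / 2) : ℝ) : ℂ) *
            Complex.exp (Complex.I * ((1 - Real.cos θ : ℝ) : ℂ) * (N : ℂ)))
      Filter.atTop
      (𝓝 (((Real.sqrt π / 2 : ℝ) : ℂ) * (1 + Complex.I))) ∧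
    ((Real.sqrt π / 2 : ℝ) : ℂ) * (1 + Complex.I)
      = (2 * (π : ℂ) * Complex.I) ^ ((1 : ℂ) / 2) / 2 := by
  refine ⟨?_, ?_⟩
  · have hβ0 : (0:ℝ) < β := lt_trans (by norm_num) hβ₁
    set L : ℂ := ((Real.sqrt π / 2 : ℝ) : ℂ) * (1 + Complex.I) with hL
    set F : ℝ → ℂ := fun U => ∫ u in (0:ℝ)..U, Complex.exp (Complex.I * (u:ℂ)^2 / 2) with hF
    set I' : ℝ → ℂ := fun N => ∫ θ in Set.Ioo (0 : ℝ) (N ^ (-β)),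
        ((N ^ ((1 : ℝ) / 2) : ℝ) : ℂ) *
          Complex.exp (Complex.I * ((1 - Real.cos θ : ℝ) : ℂ) * (N : ℂ)) with hI'
    set U : ℝ → ℝ := fun N => 2 * N ^ ((1:ℝ)/2) * Real.sin (N ^ (-β) / 2) with hU
    -- basic facts for N > 1
    have key : ∀ N : ℝ, 1 < N →
        ‖I' N - F (U N)‖ ≤ N ^ ((1:ℝ)/2 - 3*β) / 8 := by
      intro N hN1
      have hN0 : (0:ℝ) < N := lt_trans one_pos hN1
      set δ : ℝ := N ^ (-β) with hδ
      have hδ0 : 0 < δ := Real.rpow_pos_of_pos hN0 _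
      have hδ1 : δ < 1 := Real.rpow_lt_one_of_one_lt_of_neg hN1 (by linarith)
      set S : ℝ := N ^ ((1:ℝ)/2) with hS
      have hS0 : 0 < S := Real.rpow_pos_of_pos hN0 _
      have hS2 : S^2 = N := by
        rw [hS, ← Real.rpow_natCast (N ^ ((1:ℝ)/2)) 2, ← Real.rpow_mul hN0.le]
        norm_num
      -- the substitution function
      set f : ℝ → ℝ := fun θ => 2 * S * Real.sin (θ/2) with hf
      set g : ℝ → ℂ := fun u => Complex.exp (Complex.I * (u:ℂ)^2 / 2) with hg
      have hgf : ∀ θ : ℝ, g (f θ)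
          = Complex.exp (Complex.I * ((1 - Real.cos θ : ℝ) : ℂ) * (N : ℂ)) := by
        intro θ
        rw [hg]
        refine congrArg Complex.exp ?_
        have hcos : Real.cos θ = 1 - 2 * Real.sin (θ/2)^2 := by
          have h1 := Real.cos_two_mul (θ/2)
          have h2 := Real.sin_sq_add_cos_sq (θ/2)
          rw [show 2 * (θ/2) = θ by ring] at h1
          nlinarith
        rw [hf]
        have hreal : (2*S*Real.sin (θ/2))^2 = 2*((1 - Real.cos θ)*N) := by
          rw [hcos]; nlinarith [hS2]
        rw [show (((2*S*Real.sin (θ/2) : ℝ)) : ℂ)^2 = (((2*S*Real.sin (θ/2))^2 : ℝ) : ℂ) from by norm_cast]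
        rw [hreal]
        simp only [Complex.ofReal_mul, Complex.ofReal_ofNat]
        ring
      have hfderiv : ∀ x : ℝ, HasDerivAt f (S * Real.cos (x/2)) x := by
        intro x
        have h1 : HasDerivAt (fun y : ℝ => y/2) (1/2) x := by
          simpa using (hasDerivAt_id x).div_const 2
        have h2 := (Real.hasDerivAt_sin (x/2)).comp x h1
        have h3 := h2.const_mul (2 * S)
        exact h3.congr_deriv (by ring)
      have hf0 : f 0 = 0 := by simp [hf]
      have hfδ : f δ = U N := by rw [hf, hU, hS, hδ]
      -- change of variables
      have hsub : (∫ θ in (0:ℝ)..δ, (S * Real.cos (θ/2)) •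
            Complex.exp (Complex.I * ((1 - Real.cos θ : ℝ) : ℂ) * (N : ℂ)))
          = F (U N) := by
        have h1 := intervalIntegral.integral_comp_smul_deriv
          (f := f) (f' := fun x => S * Real.cos (x/2)) (g := g) (a := 0) (b := δ)
          (fun x _ => hfderiv x)
          (Continuous.continuousOn (by continuity))
          (by rw [hg]; continuity)
        rw [hf0, hfδ] at h1
        calc (∫ θ in (0:ℝ)..δ, (S * Real.cos (θ/2)) •
                Complex.exp (Complex.I * ((1 - Real.cos θ : ℝ) : ℂ) * (N : ℂ)))
            = ∫ x in (0:ℝ)..δ, (fun x => S * Real.cos (x/2)) x • (g ∘ f) x := by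
              congr 1
              funext θ
              rw [Function.comp_apply, hgf θ]
          _ = ∫ x in (0:ℝ)..(U N), g x := h1
          _ = F (U N) := by rw [hF]
      -- express I' N
      have hIint : I' N = ∫ θ in (0:ℝ)..δ,
          ((S : ℝ) : ℂ) * Complex.exp (Complex.I * ((1 - Real.cos θ : ℝ) : ℂ) * (N : ℂ)) := by
        rw [hI', intervalIntegral.integral_of_le hδ0.le, integral_Ioc_eq_integral_Ioo]
      -- split
      have hsplit : I' N - F (U N) = ∫ θ in (0:ℝ)..δ,
          ((S * (1 - Real.cos (θ/2)) : ℝ) : ℂ) *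
            Complex.exp (Complex.I * ((1 - Real.cos θ : ℝ) : ℂ) * (N : ℂ)) := by
        rw [hIint, ← hsub, ← intervalIntegral.integral_sub]
        · congr 1
          funext θ
          push_cast
          rw [Complex.real_smul]
          push_cast
          ring
        · exact Continuous.intervalIntegrable (by continuity) _ _
        · exact Continuous.intervalIntegrable (by continuity) _ _
      -- bound the error term
      rw [hsplit]
      have hbd : ∀ θ ∈ Set.uIoc (0:ℝ) δ,
          ‖((S * (1 - Real.cos (θ/2)) : ℝ) : ℂ) *
            Complex.exp (Complex.I * ((1 - Real.cos θ : ℝ) : ℂ) * (N : ℂ))‖ ≤ S * δ^2 / 8 := by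
        intro θ hθ
        rw [Set.uIoc_of_le hδ0.le] at hθ
        have hθ0 : 0 < θ := hθ.1
        have hθδ : θ ≤ δ := hθ.2
        rw [norm_mul]
        have h1 : ‖Complex.exp (Complex.I * ((1 - Real.cos θ : ℝ) : ℂ) * (N : ℂ))‖ = 1 := by
          rw [show Complex.I * ((1 - Real.cos θ : ℝ) : ℂ) * (N : ℂ)
              = (((1 - Real.cos θ) * N : ℝ) : ℂ) * Complex.I by push_cast; ring]
          rw [Complex.norm_exp_ofReal_mul_I]
        rw [h1, mul_one, Complex.norm_real, Real.norm_eq_abs]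
        have hcosle : Real.cos (θ/2) ≤ 1 := Real.cos_le_one _
        have hge : 1 - (θ/2)^2/2 ≤ Real.cos (θ/2) := Real.one_sub_sq_div_two_le_cos
        rw [abs_of_nonneg (by nlinarith)]
        have : 1 - Real.cos (θ/2) ≤ δ^2/8 := by nlinarith
        calc S * (1 - Real.cos (θ/2)) ≤ S * (δ^2/8) :=
              mul_le_mul_of_nonneg_left this hS0.le
          _ = S * δ^2 / 8 := by ring
      have := intervalIntegral.norm_integral_le_of_norm_le_const hbd
      rw [sub_zero, abs_of_pos hδ0] at this
      calc ‖∫ θ in (0:ℝ)..δ, ((S * (1 - Real.cos (θ/2)) : ℝ) : ℂ) *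
            Complex.exp (Complex.I * ((1 - Real.cos θ : ℝ) : ℂ) * (N : ℂ))‖
          ≤ S * δ^2 / 8 * δ := this
        _ = S * δ^3 / 8 := by ring
        _ = N ^ ((1:ℝ)/2 - 3*β) / 8 := by
            have h9 : S * δ^3 = N ^ ((1:ℝ)/2 - 3*β) := by
              rw [hS, hδ, ← Real.rpow_natCast (N ^ (-β)) 3, ← Real.rpow_mul hN0.le,
                ← Real.rpow_add hN0]
              norm_num
              ring_nf
            rw [h9]
    -- U tends to infinity
    have hUlow : ∀ᶠ N in atTop, N ^ ((1:ℝ)/2 - β) / 2 ≤ U N := by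
      filter_upwards [eventually_gt_atTop (1:ℝ)] with N hN1
      have hN0 : (0:ℝ) < N := lt_trans one_pos hN1
      have hδ0 : 0 < N ^ (-β) := Real.rpow_pos_of_pos hN0 _
      have hδ1 : N ^ (-β) < 1 := Real.rpow_lt_one_of_one_lt_of_neg hN1 (by linarith)
      have hS0 : 0 < N ^ ((1:ℝ)/2) := Real.rpow_pos_of_pos hN0 _
      have hsin := Real.sin_gt_sub_cube (by positivity : 0 < N ^ (-β) / 2)
      have hsq : (N ^ (-β))^2 ≤ 1 := by nlinarith
      have hcube : (N ^ (-β))^3 ≤ N ^ (-β) := by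
        calc (N ^ (-β))^3 = (N ^ (-β))^2 * N ^ (-β) := by ring
          _ ≤ 1 * N ^ (-β) := mul_le_mul_of_nonneg_right hsq hδ0.le
          _ = N ^ (-β) := one_mul _
      have hsin' : N ^ (-β) / 4 ≤ Real.sin (N ^ (-β) / 2) := by nlinarith [hcube]
      have hprod : N ^ ((1:ℝ)/2) * N ^ (-β) = N ^ ((1:ℝ)/2 - β) := by
        rw [← Real.rpow_add hN0]; ring_nf
      rw [hU]
      calc N ^ ((1:ℝ)/2 - β) / 2 = 2 * N ^ ((1:ℝ)/2) * (N ^ (-β) / 4) := by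
            rw [← hprod]; ring
        _ ≤ 2 * N ^ ((1:ℝ)/2) * Real.sin (N ^ (-β) / 2) := by
            apply mul_le_mul_of_nonneg_left hsin' (by positivity)
    have hlowtend : Tendsto (fun N : ℝ => N ^ ((1:ℝ)/2 - β) / 2) atTop atTop :=
      (tendsto_rpow_atTop (by linarith)).atTop_div_const (by norm_num)
    have hUtend : Tendsto U atTop atTop := tendsto_atTop_mono' atTop hUlow hlowtend
    have hFU : Tendsto (fun N => F (U N)) atTop (𝓝 L) := fresnel_tendsto.comp hUtend
    have hE0 : Tendsto (fun N : ℝ => N ^ ((1:ℝ)/2 - 3*β) / 8) atTop (𝓝 0) := by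
      have h := (tendsto_rpow_neg_atTop (y := 3*β - 1/2) (by linarith)).div_const 8
      rw [zero_div] at h
      apply h.congr'
      filter_upwards with N
      congr 2
      ring
    have hdiff0 : Tendsto (fun N => I' N - F (U N)) atTop (𝓝 0) := by
      apply squeeze_zero_norm' ?_ hE0
      filter_upwards [eventually_gt_atTop (1:ℝ)] with N hN
      exact key N hN
    have h := hFU.add hdiff0
    rw [add_zero] at h
    exact h.congr (fun N => by ring)
  · rw [sqrt_two_pi_I]
    push_cast
    ring
end

section
/- Let c > 0, τ > 0, α > 0, C > 0, and let V : ℝ → ℂ be measurable with |V(z)| ≤ C(1+|z|)^{-3-α} for all z ∈ ℝ. Then ∫_ℝ |V(z)| · | (cτ/ε² + z)² (cτ/ε²)^{-1} 1_{{|z| < cτ/ε²}} − (cτ/ε² + 2z) | dz → 0 as ε → 0. -/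
open MeasureTheory Real Filter
open scoped Topology

/-- the second-order Jacobian-approximation error term in dimension `d = 3`
vanishes: if `|V(z)| ≤ C(1+|z|)^{-3-α}`, then
`∫_ℝ |V(z)| |(cτ/ε² + z)²(cτ/ε²)^{-1} 1_{|z|<cτ/ε²} - (cτ/ε² + 2z)| dz → 0` as `ε → 0`. -/
theorem jacobian_error_d3 (c τ α C : ℝ) (hc : 0 < c) (hτ : 0 < τ) (hα : 0 < α) (hC : 0 < C)
    (V : ℝ → ℂ) (hV_meas : Measurable V)
    (hV : ∀ z : ℝ, ‖V z‖ ≤ C * (1 + |z|) ^ (-3 - α)) :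
    Filter.Tendsto (fun ε : ℝ =>
        ∫ z : ℝ, ‖V z‖ *
          |(c * τ / ε ^ 2 + z) ^ 2 * (c * τ / ε ^ 2)⁻¹ *
              Set.indicator {z' : ℝ | |z'| < c * τ / ε ^ 2} (fun _ => (1 : ℝ)) z -
            (c * τ / ε ^ 2 + 2 * z)|)
      (𝓝[>] (0 : ℝ)) (𝓝 0) := by
  have hcτ : 0 < c * τ := mul_pos hc hτ
  have key : Tendsto (fun ε : ℝ =>
        ∫ z : ℝ, ‖V z‖ *
          |(c * τ / ε ^ 2 + z) ^ 2 * (c * τ / ε ^ 2)⁻¹ *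
              Set.indicator {z' : ℝ | |z'| < c * τ / ε ^ 2} (fun _ => (1 : ℝ)) z -
            (c * τ / ε ^ 2 + 2 * z)|)
      (𝓝[>] (0 : ℝ)) (𝓝 (∫ _ : ℝ, (0:ℝ))) := by
    apply tendsto_integral_filter_of_dominated_convergence
      (fun z => 3 * C * (1 + |z|) ^ (-(2 + α)))
    · -- measurability
      filter_upwards with ε
      have hs : MeasurableSet {z' : ℝ | |z'| < c * τ / ε ^ 2} :=
        measurableSet_lt measurable_abs measurable_const
      apply Measurable.aestronglyMeasurable
      apply hV_meas.norm.mul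
      apply Measurable.abs
      exact (((measurable_const.add measurable_id).pow_const 2 |>.mul_const _).mul
        (measurable_const.indicator hs)).sub
        (measurable_const.add (measurable_id.const_mul 2))
    · -- bound
      filter_upwards [self_mem_nhdsWithin] with ε (hε : ε ∈ Set.Ioi (0:ℝ))
      have hε0 : (0:ℝ) < ε := hε
      have hM : 0 < c * τ / ε ^ 2 := div_pos hcτ (by positivity)
      filter_upwards with z
      set M := c * τ / ε ^ 2 with hMdef
      have h1 : |(M + z) ^ 2 * M⁻¹ *
              Set.indicator {z' : ℝ | |z'| < M} (fun _ => (1 : ℝ)) z - (M + 2 * z)|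
            ≤ 3 * |z| := by
        by_cases hz : |z| < M
        · rw [Set.indicator_of_mem (show z ∈ {z' : ℝ | |z'| < M} from hz)]
          have heq : (M + z) ^ 2 * M⁻¹ * 1 - (M + 2 * z) = z ^ 2 / M := by
            field_simp; ring
          rw [heq, abs_div, abs_of_pos hM, div_le_iff₀ hM]
          have habs : |z ^ 2| = |z| * |z| := by rw [sq, abs_mul]
          rw [habs]
          nlinarith [abs_nonneg z, hz.le]
        · rw [Set.indicator_of_notMem (show z ∉ {z' : ℝ | |z'| < M} from hz)]
          push_neg at hz
          rw [mul_zero, zero_sub, abs_neg]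
          calc |M + 2 * z| ≤ |M| + |2 * z| := abs_add_le _ _
            _ ≤ |z| + 2 * |z| := by
                rw [abs_of_pos hM, abs_mul, abs_two]
                linarith [hz]
            _ = 3 * |z| := by ring
      have hnn : (0:ℝ) ≤ ‖V z‖ * |(M + z) ^ 2 * M⁻¹ *
              Set.indicator {z' : ℝ | |z'| < M} (fun _ => (1 : ℝ)) z - (M + 2 * z)| := by
        positivity
      rw [Real.norm_of_nonneg hnn]
      have h2 : |z| * (1 + |z|) ^ (-3 - α) ≤ (1 + |z|) ^ (-(2 + α)) := by
        have h3 : (1 + |z| : ℝ) ^ (-(2 + α)) = (1 + |z|) * (1 + |z|) ^ (-3 - α) := by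
          rw [show (-(2 + α)) = 1 + (-3 - α) by ring, Real.rpow_add (by positivity),
            Real.rpow_one]
        rw [h3]
        exact mul_le_mul_of_nonneg_right (by linarith [abs_nonneg z])
          (Real.rpow_nonneg (by positivity) _)
      calc ‖V z‖ * |(M + z) ^ 2 * M⁻¹ *
              Set.indicator {z' : ℝ | |z'| < M} (fun _ => (1 : ℝ)) z - (M + 2 * z)|
          ≤ (C * (1 + |z|) ^ (-3 - α)) * (3 * |z|) :=
            mul_le_mul (hV z) h1 (abs_nonneg _) (by positivity)
        _ = 3 * C * (|z| * (1 + |z|) ^ (-3 - α)) := by ring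
        _ ≤ 3 * C * (1 + |z|) ^ (-(2 + α)) :=
            mul_le_mul_of_nonneg_left h2 (by positivity)
    · -- integrable bound
      have hint : Integrable (fun z : ℝ => ((1:ℝ) + ‖z‖) ^ (-(2 + α))) := by
        apply integrable_one_add_norm
        simp only [Module.finrank_self]
        push_cast
        linarith
      simpa [Real.norm_eq_abs, mul_assoc] using hint.const_mul (3 * C)
    · -- pointwise limit
      filter_upwards with z
      have hX : (0:ℝ) < c * τ / (1 + |z|) := div_pos hcτ (by positivity)
      have hδ : 0 < Real.sqrt (c * τ / (1 + |z|)) := Real.sqrt_pos.mpr hX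
      have hev : ∀ᶠ ε in 𝓝[>] (0:ℝ),
          ‖V z‖ *
          |(c * τ / ε ^ 2 + z) ^ 2 * (c * τ / ε ^ 2)⁻¹ *
              Set.indicator {z' : ℝ | |z'| < c * τ / ε ^ 2} (fun _ => (1 : ℝ)) z -
            (c * τ / ε ^ 2 + 2 * z)|
          = ‖V z‖ * (z ^ 2 * ε ^ 2 / (c * τ)) := by
        filter_upwards [Ioo_mem_nhdsGT_of_mem ⟨le_refl (0:ℝ), hδ⟩] with ε hεmem
        obtain ⟨hε0, hεδ⟩ := hεmem
        have hε2 : ε ^ 2 < c * τ / (1 + |z|) := (Real.lt_sqrt hε0.le).mp hεδ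
        have hM : |z| < c * τ / ε ^ 2 := by
          rw [lt_div_iff₀ (by positivity)]
          rw [lt_div_iff₀ (by positivity)] at hε2
          nlinarith [abs_nonneg z, sq_nonneg ε]
        have hmem : z ∈ {z' : ℝ | |z'| < c * τ / ε ^ 2} := hM
        rw [Set.indicator_of_mem hmem]
        have heq : (c * τ / ε ^ 2 + z) ^ 2 * (c * τ / ε ^ 2)⁻¹ * 1
            - (c * τ / ε ^ 2 + 2 * z) = z ^ 2 * ε ^ 2 / (c * τ) := by
          field_simp
          ring
        rw [heq, abs_of_nonneg (by positivity)]
      have hcont : Tendsto (fun ε : ℝ => ‖V z‖ * (z ^ 2 * ε ^ 2 / (c * τ)))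
          (𝓝[>] (0:ℝ)) (𝓝 0) := by
        have : Tendsto (fun ε : ℝ => ‖V z‖ * (z ^ 2 * ε ^ 2 / (c * τ)))
            (𝓝 (0:ℝ)) (𝓝 (‖V z‖ * (z ^ 2 * (0:ℝ) ^ 2 / (c * τ)))) := by
          apply Continuous.tendsto
          continuity
        simpa using this.mono_left nhdsWithin_le_nhds
      exact Filter.Tendsto.congr' (Filter.EventuallyEq.symm hev) hcont
  simpa using key
end

section
/- Let φ ∈ C¹([0, π/2]; ℝ). Then ∫₀^{π/2} e^{i(1 − cos θ)N} (dφ/dθ)(θ) dθ → 0 as N → ∞. -/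
/-!
The substitution `z = 1 - cos θ` turns the phase into the linear phase `z N`: since
`1 - cos` is injective on `(0, π/2)` with nonvanishing derivative `sin`, the integral becomes
`∫₀¹ e^{izN} k(z) dz` with `k(1 - cos θ) = φ'(θ) / sin θ`, and this tends to `0` by the
Riemann–Lebesgue lemma.
-/

open MeasureTheory Real Filter Set
open scoped Topology FourierTransform

section OscillatoryIntegral

variable {E : Type*} [NormedAddCommGroup E] [NormedSpace ℂ E]

theorem tendsto_setIntegral_exp_mul_I_smul {t : Set ℝ} (ht : MeasurableSet t) (h : ℝ → E) :
    Tendsto (fun N : ℝ => ∫ z in t, Complex.exp (Complex.I * z * N) • h z) atTop (𝓝 0) := by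
  have hfreq : Tendsto (fun N : ℝ => -(N / (2 * π))) atTop (cocompact ℝ) := by
    rw [cocompact_eq_atBot_atTop]
    exact (tendsto_neg_atTop_atBot.comp (tendsto_id.atTop_div_const (by positivity))).mono_right
      le_sup_left
  refine ((Real.tendsto_integral_exp_smul_cocompact (t.indicator h)).comp hfreq).congr fun N => ?_
  simp only [Function.comp_apply, ← indicator_smul, integral_indicator ht, Circle.smul_def,
    Real.fourierChar_apply]
  congr! 3 with z
  push_cast
  field_simp

theorem tendsto_setIntegral_exp_phase_smul {s : Set ℝ} {g g' : ℝ → ℝ} (hs : MeasurableSet s)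
    (hg : ∀ x ∈ s, HasDerivWithinAt g (g' x) s x) (hg_inj : InjOn g s) (hg' : ∀ x ∈ s, g' x ≠ 0)
    (f : ℝ → E) :
    Tendsto (fun N : ℝ => ∫ x in s, Complex.exp (Complex.I * g x * N) • f x) atTop (𝓝 0) := by
  set h : ℝ → E := fun z => |g' (Function.invFunOn g s z)|⁻¹ • f (Function.invFunOn g s z)
  have hlinear : ∀ N : ℝ, ∫ z in g '' s, Complex.exp (Complex.I * z * N) • h z
      = ∫ x in s, Complex.exp (Complex.I * g x * N) • f x := by
    intro N
    rw [integral_image_eq_integral_abs_deriv_smul hs hg hg_inj]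
    refine setIntegral_congr_fun hs fun x hx => ?_
    simp only [h, hg_inj.leftInvOn_invFunOn hx]
    rw [smul_comm, smul_inv_smul₀ (abs_ne_zero.2 (hg' x hx))]
  have hgs : MeasurableSet (g '' s) :=
    hs.image_of_continuousOn_injOn (fun x hx => (hg x hx).continuousWithinAt) hg_inj
  exact (tendsto_setIntegral_exp_mul_I_smul hgs h).congr hlinear

end OscillatoryIntegral

theorem oscillatory_derivative_integral_general (φ : ℝ → ℝ) :
    Filter.Tendsto (fun N : ℝ =>
        ∫ θ in Set.Ioo (0 : ℝ) (π / 2),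
          Complex.exp (Complex.I * ((1 - Real.cos θ : ℝ) : ℂ) * (N : ℂ)) *
            ((derivWithin φ (Set.Icc 0 (π / 2)) θ : ℝ) : ℂ))
      Filter.atTop (𝓝 0) := by
  have hsub : Ioo 0 (π / 2) ⊆ Ioo 0 π := Ioo_subset_Ioo_right (by linarith [pi_pos])
  exact tendsto_setIntegral_exp_phase_smul measurableSet_Ioo
    (fun θ _ => ((hasDerivAt_cos θ).const_sub 1).hasDerivWithinAt.congr_deriv (neg_neg _))
    ((sub_right_injective (b := 1)).comp_injOn (injOn_cos.mono (hsub.trans Ioo_subset_Icc_self)))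
    (fun θ hθ => (sin_pos_of_pos_of_lt_pi (hsub hθ).1 (hsub hθ).2).ne') _

/-- for `φ ∈ C¹([0,π/2];ℝ)`, the oscillatory integral
`∫₀^{π/2} e^{i(1-cos θ)N} φ'(θ) dθ` tends to `0` as `N → ∞`. -/
theorem oscillatory_derivative_integral (φ : ℝ → ℝ)
    (hφ : ContDiffOn ℝ 1 φ (Set.Icc 0 (π / 2))) :
    Filter.Tendsto (fun N : ℝ =>
        ∫ θ in Set.Ioo (0 : ℝ) (π / 2),
          Complex.exp (Complex.I * ((1 - Real.cos θ : ℝ) : ℂ) * (N : ℂ)) *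
            ((derivWithin φ (Set.Icc 0 (π / 2)) θ : ℝ) : ℂ))
      Filter.atTop (𝓝 0) :=
  oscillatory_derivative_integral_general φ
end
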